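/- arXiv:1012.1849 — 2 statements merged into one kernel-verified Lean document; each statement's English description precedes it below -/
import Mathlib

section
/- Let A be an alternative algebra with identity and let c, d be invertible elements of A. Then the principal isotope A_{R_c, L_d} (with multiplication x ∘ y = (xc)(dy)) is unital with identity element (cd)⁻¹. -/
/-!
In an alternative algebra the associator `[x, y, z]` is alternating, and two instances of the
Teichmüller identity give `[x, y, y z] = [x, y, z] y` and `[x, y, z y] = y [x, y, z]`.
If `a b = b a = 1`, these make `v = [a, b, x]` satisfy `a v = b v = v b = 0`, so
`v = [a, b, v] = -[a, v, b] = 0`: thus `a (b x) = x = (x a) b`, i.e. `L_a⁻¹ = L_b` and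
`R_a⁻¹ = R_b`. Consequently `e c = d⁻¹` and `d e = c⁻¹` for `e = (c d)⁻¹`, and
`(e c)(d x) = d⁻¹ (d x) = x`, `(x c)(d e) = (x c) c⁻¹ = x`.
-/

namespace LinearMap

variable {R M : Type*} [CommSemiring R] [AddCommGroup M] [Module R M]

def associator (mul : M →ₗ[R] M →ₗ[R] M) (x y z : M) : M :=
  mul (mul x y) z - mul x (mul y z)

theorem associator_teichmuller (mul : M →ₗ[R] M →ₗ[R] M) (w x y z : M) :
    associator mul (mul w x) y z - associator mul w (mul x y) z + associator mul w x (mul y z) =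
      mul w (associator mul x y z) + mul (associator mul w x y) z := by
  simp only [associator, map_sub, sub_apply]
  abel

theorem associator_one_right (mul : M →ₗ[R] M →ₗ[R] M) {one : M}
    (hone : ∀ x, mul x one = x) (x y : M) : associator mul x y one = 0 := by
  rw [associator, hone, hone, sub_self]

structure IsAlternative (mul : M →ₗ[R] M →ₗ[R] M) : Prop where
  associator_self_left : ∀ x y, associator mul x x y = 0
  associator_self_right : ∀ x y, associator mul x y y = 0

namespace IsAlternative

variable {mul : M →ₗ[R] M →ₗ[R] M}

theorem associator_swap_left (h : IsAlternative mul) (x y z : M) :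
    associator mul y x z = -associator mul x y z := by
  have hxy := h.associator_self_left (x + y) z
  have hx := h.associator_self_left x z
  have hy := h.associator_self_left y z
  simp only [associator, map_add, add_apply] at hxy hx hy ⊢
  linear_combination (norm := abel) hxy - hx - hy

theorem associator_swap_right (h : IsAlternative mul) (x y z : M) :
    associator mul x z y = -associator mul x y z := by
  have hyz := h.associator_self_right x (y + z)
  have hy := h.associator_self_right x y
  have hz := h.associator_self_right x z
  simp only [associator, map_add, add_apply] at hyz hy hz ⊢
  linear_combination (norm := abel) hyz - hy - hz

theorem associator_rotate (h : IsAlternative mul) (x y z : M) :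
    associator mul x y z = associator mul y z x := by
  rw [h.associator_swap_left, h.associator_swap_right, neg_neg]

theorem associator_mul_left_third (h : IsAlternative mul) (x y z : M) :
    associator mul x y (mul y z) = mul (associator mul x y z) y := by
  have t₁ := associator_teichmuller mul x y y z
  have t₂ := associator_teichmuller mul z x y y
  simp only [h.associator_self_left, h.associator_self_right, map_zero, zero_apply,
    add_zero, zero_add] at t₁ t₂
  rw [h.associator_rotate z (mul x y) y, h.associator_rotate z x (mul y y),
    h.associator_rotate z x y] at t₂
  linear_combination (norm := abel) t₁ + t₂

theorem associator_mul_right_third (h : IsAlternative mul) (x y z : M) :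
    associator mul x y (mul z y) = mul y (associator mul x y z) := by
  have t₁ := associator_teichmuller mul y y x z
  have t₂ := associator_teichmuller mul z y y x
  simp only [h.associator_self_left, h.associator_self_right, map_zero, zero_apply,
    add_zero] at t₁ t₂
  rw [h.associator_swap_left x y z, map_neg] at t₁
  rw [h.associator_rotate z (mul y y) x, h.associator_rotate z y (mul y x),
    h.associator_rotate (mul z y) y x, h.associator_swap_left x y] at t₂
  linear_combination (norm := abel) -t₁ - t₂

theorem associator_eq_zero_of_mul_eq_one (h : IsAlternative mul) {one a b : M}
    (hone : ∀ x, mul one x = x ∧ mul x one = x) (hab : mul a b = one) (hba : mul b a = one)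
    (x : M) : associator mul a b x = 0 := by
  have hone_right : ∀ x, mul x one = x := fun x => (hone x).2
  generalize hv : associator mul a b x = v
  have hxab : associator mul x a b = v := (h.associator_rotate x a b).trans hv
  have hav : mul a v = 0 := by
    rw [← hxab, ← h.associator_mul_right_third, hba, associator_one_right mul hone_right]
  have hbv : mul b v = 0 := by
    rw [← neg_eq_zero, ← map_neg, ← hxab, ← h.associator_swap_right,
      ← h.associator_mul_right_third, hab, associator_one_right mul hone_right]
  have hvb : mul v b = 0 := by
    rw [← neg_eq_zero, ← neg_apply, ← map_neg, ← hxab, ← h.associator_swap_right,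
      ← h.associator_mul_left_third, hba, associator_one_right mul hone_right]
  calc v = associator mul a b v := by rw [associator, hab, (hone v).1, hbv, map_zero, sub_zero]
    _ = -associator mul a v b := h.associator_swap_right a v b
    _ = 0 := by rw [associator, hav, hvb, map_zero, map_zero, zero_apply, sub_zero, neg_zero]

theorem mul_mul_cancel_left_of_mul_eq_one (h : IsAlternative mul) {one a b : M}
    (hone : ∀ x, mul one x = x ∧ mul x one = x) (hab : mul a b = one) (hba : mul b a = one)
    (x : M) : mul a (mul b x) = x := by
  have hx := h.associator_eq_zero_of_mul_eq_one hone hab hba x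
  rwa [associator, hab, (hone x).1, sub_eq_zero, eq_comm] at hx

theorem mul_mul_cancel_right_of_mul_eq_one (h : IsAlternative mul) {one a b : M}
    (hone : ∀ x, mul one x = x ∧ mul x one = x) (hab : mul a b = one) (hba : mul b a = one)
    (x : M) : mul (mul x a) b = x := by
  have hx := h.associator_eq_zero_of_mul_eq_one hone hab hba x
  rwa [← h.associator_rotate, associator, hab, (hone x).2, sub_eq_zero] at hx

end IsAlternative

end LinearMap

theorem alternative_isotope_identity_general {k A : Type*} [Field k] [AddCommGroup A] [Module k A]
    (mul : A →ₗ[k] A →ₗ[k] A) (one : A)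
    (hone : ∀ x, mul one x = x ∧ mul x one = x)
    (haltL : ∀ x y, mul (mul x x) y = mul x (mul x y))
    (haltR : ∀ x y, mul x (mul y y) = mul (mul x y) y)
    (c d c' d' e : A)
    (hc : mul c c' = one ∧ mul c' c = one)
    (hd : mul d d' = one ∧ mul d' d = one)
    (he : mul (mul c d) e = one ∧ mul e (mul c d) = one) :
    ∀ x, mul (mul e c) (mul d x) = x ∧ mul (mul x c) (mul d e) = x := by
  have hmul : LinearMap.IsAlternative mul :=
    ⟨fun x y => sub_eq_zero.2 (haltL x y), fun x y => sub_eq_zero.2 (haltR x y).symm⟩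
  have hec : mul e c = d' :=
    calc mul e c = mul e (mul (mul c d) d') := by
          rw [hmul.mul_mul_cancel_right_of_mul_eq_one hone hd.1 hd.2]
      _ = d' := hmul.mul_mul_cancel_left_of_mul_eq_one hone he.2 he.1 d'
  have hde : mul d e = c' :=
    calc mul d e = mul (mul c' (mul c d)) e := by
          rw [hmul.mul_mul_cancel_left_of_mul_eq_one hone hc.2 hc.1]
      _ = c' := hmul.mul_mul_cancel_right_of_mul_eq_one hone he.1 he.2 c'
  intro x
  rw [hec, hde]
  exact ⟨hmul.mul_mul_cancel_left_of_mul_eq_one hone hd.2 hd.1 x,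
    hmul.mul_mul_cancel_right_of_mul_eq_one hone hc.1 hc.2 x⟩

/-- If `A` is a finite-dimensional unital alternative algebra and `c, d` are
invertible elements, then the isotope `A_{R_c, L_d}` with multiplication
`x ∘ y = (x*c)*(d*y)` is unital with identity element `(c*d)⁻¹`. -/
theorem alternative_isotope_identity {k A : Type*} [Field k] [AddCommGroup A] [Module k A]
    [FiniteDimensional k A]
    (mul : A →ₗ[k] A →ₗ[k] A) (one : A)
    (hone : ∀ x, mul one x = x ∧ mul x one = x)
    (haltL : ∀ x y, mul (mul x x) y = mul x (mul x y))
    (haltR : ∀ x y, mul x (mul y y) = mul (mul x y) y)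
    (c d c' d' e : A)
    (hc : mul c c' = one ∧ mul c' c = one)
    (hd : mul d d' = one ∧ mul d' d = one)
    (he : mul (mul c d) e = one ∧ mul e (mul c d) = one) :
    ∀ x, mul (mul e c) (mul d x) = x ∧ mul (mul x c) (mul d e) = x :=
  alternative_isotope_identity_general mul one hone haltL haltR c d c' d' e hc hd he
end

section
/- Let A be an associative Hurwitz algebra and φ an invertible linear map on A admitting triality components (φ(xy) = φ₁(x)φ₂(y) for some invertible linear φ₁, φ₂). Then φ(1) is invertible in A and φ(xy) = φ(x)·φ(1)⁻¹·φ(y) for all x, y ∈ A. -/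
/-!
Putting `y = 1` and `x = 1` in `φ (x * y) = φ₁ x * φ₂ y` gives `φ x = φ₁ x * c` and
`φ y = b * φ₂ y` with `c = φ₂ 1`, `b = φ₁ 1`. Thus right multiplication by `c` is the bijection
`φ ∘ φ₁⁻¹` and left multiplication by `b` is `φ ∘ φ₂⁻¹`, so `b` and `c` are units, hence so is
`φ 1 = b * c`, and `φ x * (b * c)⁻¹ * φ y = φ₁ x * c * c⁻¹ * b⁻¹ * b * φ₂ y = φ (x * y)`.
-/

section Monoid

variable {M : Type*} [Monoid M]

theorem isUnit_of_forall_eq_mul_right {f g : M ≃ M} {c : M} (h : ∀ x, f x = g x * c) :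
    IsUnit c := by
  have hc : (· * c) = f ∘ g.symm := funext fun z => by simp [h]
  exact IsUnit.isUnit_iff_mulRight_bijective.mpr (hc ▸ (g.symm.trans f).bijective)

theorem isUnit_of_forall_eq_mul_left {f g : M ≃ M} {b : M} (h : ∀ x, f x = b * g x) :
    IsUnit b := by
  have hb : (b * ·) = f ∘ g.symm := funext fun z => by simp [h]
  exact IsUnit.isUnit_iff_mulLeft_bijective.mpr (hb ▸ (g.symm.trans f).bijective)

variable {φ φ₁ φ₂ : M ≃ M}

theorem map_eq_mul_map_one_of_triality (htri : ∀ x y, φ (x * y) = φ₁ x * φ₂ y) (x : M) :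
    φ x = φ₁ x * φ₂ 1 := by
  simpa using htri x 1

theorem map_eq_map_one_mul_of_triality (htri : ∀ x y, φ (x * y) = φ₁ x * φ₂ y) (y : M) :
    φ y = φ₁ 1 * φ₂ y := by
  simpa using htri 1 y

theorem map_one_eq_of_triality (htri : ∀ x y, φ (x * y) = φ₁ x * φ₂ y) :
    φ 1 = φ₁ 1 * φ₂ 1 := by
  simpa using htri 1 1

theorem isUnit_map_one_of_triality (htri : ∀ x y, φ (x * y) = φ₁ x * φ₂ y) : IsUnit (φ 1) :=
  map_one_eq_of_triality htri ▸
    (isUnit_of_forall_eq_mul_left (map_eq_map_one_mul_of_triality htri)).mul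
      (isUnit_of_forall_eq_mul_right (map_eq_mul_map_one_of_triality htri))

end Monoid

theorem map_mul_eq_of_triality {M₀ : Type*} [MonoidWithZero M₀] {φ φ₁ φ₂ : M₀ ≃ M₀}
    (htri : ∀ x y, φ (x * y) = φ₁ x * φ₂ y) (x y : M₀) :
    φ (x * y) = φ x * Ring.inverse (φ 1) * φ y := by
  obtain ⟨b, hb⟩ := isUnit_of_forall_eq_mul_left (map_eq_map_one_mul_of_triality htri)
  obtain ⟨c, hc⟩ := isUnit_of_forall_eq_mul_right (map_eq_mul_map_one_of_triality htri)
  rw [map_eq_mul_map_one_of_triality htri x, map_eq_map_one_mul_of_triality htri y,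
    map_one_eq_of_triality htri, htri, ← hb, ← hc, ← Units.val_mul, Ring.inverse_unit]
  simp [mul_assoc]

theorem assoc_triality_formula_general {k A : Type*} [Field k] [Ring A] [Algebra k A]
    (φ φ₁ φ₂ : A ≃ₗ[k] A)
    (htri : ∀ x y : A, φ (x * y) = φ₁ x * φ₂ y) :
    IsUnit (φ 1) ∧ ∀ x y : A, φ (x * y) = φ x * Ring.inverse (φ 1) * φ y :=
  ⟨isUnit_map_one_of_triality (φ := φ.toEquiv) (φ₁ := φ₁.toEquiv) (φ₂ := φ₂.toEquiv) htri,
    map_mul_eq_of_triality (φ := φ.toEquiv) (φ₁ := φ₁.toEquiv) (φ₂ := φ₂.toEquiv) htri⟩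

/-- If `A` is an associative Hurwitz algebra and `φ` is an invertible linear
map admitting triality components (`φ (x*y) = φ₁ x * φ₂ y`), then `φ 1` is invertible and
`φ (x*y) = φ x * (φ 1)⁻¹ * φ y` for all `x, y`. -/
theorem assoc_triality_formula {k A : Type*} [Field k] [Ring A] [Algebra k A]
    [FiniteDimensional k A]
    (n : QuadraticForm k A)
    (hnd : (QuadraticMap.polarBilin n).Nondegenerate)
    (hn : ∀ x y : A, n (x * y) = n x * n y)
    (φ φ₁ φ₂ : A ≃ₗ[k] A)
    (htri : ∀ x y : A, φ (x * y) = φ₁ x * φ₂ y) :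
    IsUnit (φ 1) ∧ ∀ x y : A, φ (x * y) = φ x * Ring.inverse (φ 1) * φ y :=
  assoc_triality_formula_general φ φ₁ φ₂ htri
end
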